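/- Let W ∈ ℝ^{m×n} be a real matrix and let |W| be its entrywise absolute value matrix. Then the infimum of ‖|W| - B‖_F over matrices B ∈ ℝ^{m×n} of rank at most 1 is at most the infimum of ‖W - B‖_F over matrices B ∈ ℝ^{m×n} of rank at most 1. -/

import Mathlib

open Matrix

/-- The entrywise absolute value matrix of `W`. -/
noncomputable def absM {m n : ℕ} (W : Matrix (Fin m) (Fin n) ℝ) :
    Matrix (Fin m) (Fin n) ℝ :=
  Matrix.of fun i j => |W i j|

/-- The Frobenius norm `‖M‖_F = (Σ_{i,j} M_{ij}²)^{1/2}`. -/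
noncomputable def frobNorm {m n : ℕ} (M : Matrix (Fin m) (Fin n) ℝ) : ℝ :=
  Real.sqrt (∑ i, ∑ j, (M i j) ^ 2)

/-!
Every rank-one matrix is an outer product `u vᵀ`, and `|u vᵀ| = |u| |v|ᵀ` is again of rank at most
one. By the reverse triangle inequality `||a| - |b|| ≤ |a - b|` applied entrywise,
`‖|W| - |B|‖_F ≤ ‖W - B‖_F`, so every error achieved for `W` is matched for `|W|`.
-/

theorem Matrix.exists_eq_vecMulVec_of_rank_le_one {K m n : Type*} [Field K] [Fintype m]
    [Fintype n] {B : Matrix m n K} (hB : B.rank ≤ 1) :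
    ∃ (u : m → K) (v : n → K), B = vecMulVec u v := by
  rw [rank_eq_finrank_span_cols] at hB
  obtain ⟨u, hu⟩ := (Submodule.finrank_le_one_iff_isPrincipal _).1 hB
  have hcol (j : n) : Bᵀ j ∈ Submodule.span K {u} :=
    hu ▸ Submodule.subset_span (Set.mem_range_self j)
  choose v hv using fun j => Submodule.mem_span_singleton.1 (hcol j)
  refine ⟨u, v, Matrix.ext fun i j => ?_⟩
  rw [vecMulVec_apply, mul_comm, ← transpose_apply B, ← hv j, Pi.smul_apply, smul_eq_mul]

theorem absM_vecMulVec {m n : ℕ} (u : Fin m → ℝ) (v : Fin n → ℝ) :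
    absM (vecMulVec u v) = vecMulVec |u| |v| :=
  Matrix.ext fun i j => by simp [absM, vecMulVec_apply, abs_mul]

theorem rank_absM_le_one {m n : ℕ} {B : Matrix (Fin m) (Fin n) ℝ} (hB : B.rank ≤ 1) :
    (absM B).rank ≤ 1 := by
  obtain ⟨u, v, rfl⟩ := exists_eq_vecMulVec_of_rank_le_one hB
  rw [absM_vecMulVec]
  exact rank_vecMulVec_le _ _

theorem frobNorm_nonneg {m n : ℕ} (M : Matrix (Fin m) (Fin n) ℝ) : 0 ≤ frobNorm M :=
  Real.sqrt_nonneg _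

theorem frobNorm_le_of_abs_le {m n : ℕ} {A B : Matrix (Fin m) (Fin n) ℝ}
    (h : ∀ i j, |A i j| ≤ |B i j|) : frobNorm A ≤ frobNorm B :=
  Real.sqrt_le_sqrt <| Finset.sum_le_sum fun i _ => Finset.sum_le_sum fun j _ =>
    sq_le_sq.2 (h i j)

theorem frobNorm_absM_sub_absM_le {m n : ℕ} (A B : Matrix (Fin m) (Fin n) ℝ) :
    frobNorm (absM A - absM B) ≤ frobNorm (A - B) :=
  frobNorm_le_of_abs_le fun i j => abs_abs_sub_abs_le_abs_sub (A i j) (B i j)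

/-- The best rank ≤ 1 Frobenius approximation error of `|W|` is at most that of `W`. -/
theorem sInf_rank_one_error_absM_le {m n : ℕ} (W : Matrix (Fin m) (Fin n) ℝ) :
    sInf {x : ℝ | ∃ B : Matrix (Fin m) (Fin n) ℝ, B.rank ≤ 1 ∧ x = frobNorm (absM W - B)} ≤
    sInf {x : ℝ | ∃ B : Matrix (Fin m) (Fin n) ℝ, B.rank ≤ 1 ∧ x = frobNorm (W - B)} := by
  have hbdd : BddBelow
      {x : ℝ | ∃ B : Matrix (Fin m) (Fin n) ℝ, B.rank ≤ 1 ∧ x = frobNorm (absM W - B)} :=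
    ⟨0, by rintro _ ⟨B, -, rfl⟩; exact frobNorm_nonneg _⟩
  refine le_csInf ⟨_, 0, by simp, rfl⟩ ?_
  rintro _ ⟨B, hB, rfl⟩
  exact (csInf_le hbdd ⟨absM B, rank_absM_le_one hB, rfl⟩).trans (frobNorm_absM_sub_absM_le W B)
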